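/- Let K be a field containing k, with char k = p > 0, and let D be a k-linear derivation of K such that [K : K^D] = p. Then D is p-closed: there exists α ∈ K^D with D^p = α • D, where D^p is the p-fold composite of D. -/
import Mathlib


/-- The constant field `K^D` of a `k`-linear derivation `D` of a field `K`,
i.e. the subfield `{x ∈ K | D x = 0}`. -/
def constantField (k K : Type*) [Field k] [Field K] [Algebra k K]
    (D : Derivation k K K) : Subfield K where
  carrier := {x : K | D x = 0}
  one_mem' := D.map_one_eq_zero
  mul_mem' := by
    intro a b ha hb
    simp only [Set.mem_setOf_eq] at *
    rw [D.leibniz, ha, hb, smul_zero, smul_zero, add_zero]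
  zero_mem' := D.map_zero
  add_mem' := by
    intro a b ha hb
    simp only [Set.mem_setOf_eq] at *
    rw [map_add, ha, hb, add_zero]
  neg_mem' := by
    intro a ha
    simp only [Set.mem_setOf_eq] at *
    rw [map_neg, ha, neg_zero]
  inv_mem' := by
    intro a ha
    simp only [Set.mem_setOf_eq] at *
    rw [D.leibniz_inv, ha, smul_zero]

open Finset Polynomial IntermediateField

section Aux

variable {k K : Type*} [Field k] [Field K] [Algebra k K]

theorem Derivation.iterate_zero_apply' (D : Derivation k K K) (n : ℕ) :
    (⇑D)^[n] 0 = 0 := by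
  induction n with
  | zero => rfl
  | succ n IH => rw [Function.iterate_succ_apply, D.map_zero, IH]

theorem Derivation.iterate_eq_zero_of (D : Derivation k K K) {n : ℕ} (hn : n ≠ 0)
    {x : K} (hx : D x = 0) : (⇑D)^[n] x = 0 := by
  obtain ⟨m, rfl⟩ := Nat.exists_eq_succ_of_ne_zero hn
  rw [Function.iterate_succ_apply, hx, D.iterate_zero_apply']

theorem Derivation.iterate_leibniz (D : Derivation k K K) (n : ℕ) (a b : K) :
    (⇑D)^[n] (a * b) =
      ∑ i ∈ Finset.range (n + 1), n.choose i • ((⇑D)^[n - i] a * (⇑D)^[i] b) := by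
  induction n with
  | zero => simp
  | succ n IH =>
    calc
      (⇑D)^[n + 1] (a * b) =
          D (∑ i ∈ range n.succ, n.choose i • ((⇑D)^[n - i] a * (⇑D)^[i] b)) := by
        rw [Function.iterate_succ_apply', IH]
      _ = (∑ i ∈ range n.succ, n.choose i • ((⇑D)^[n - i + 1] a * (⇑D)^[i] b)) +
          ∑ i ∈ range n.succ, n.choose i • ((⇑D)^[n - i] a * (⇑D)^[i + 1] b) := by
        rw [map_sum]
        have : ∀ i ∈ range n.succ,
            D (n.choose i • ((⇑D)^[n - i] a * (⇑D)^[i] b)) =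
              n.choose i • ((⇑D)^[n - i + 1] a * (⇑D)^[i] b) +
              n.choose i • ((⇑D)^[n - i] a * (⇑D)^[i + 1] b) := by
          intro i _
          rw [map_nsmul, D.leibniz, smul_eq_mul, smul_eq_mul,
            Function.iterate_succ_apply', Function.iterate_succ_apply', ← smul_add]
          ring_nf
        rw [Finset.sum_congr rfl this, Finset.sum_add_distrib]
      _ = (∑ i ∈ range n.succ, n.choose i.succ • ((⇑D)^[n - i] a * (⇑D)^[i + 1] b)) +
            1 • ((⇑D)^[n + 1] a * (⇑D)^[0] b) +
          ∑ i ∈ range n.succ, n.choose i • ((⇑D)^[n - i] a * (⇑D)^[i + 1] b) := ?_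
      _ = ((∑ i ∈ range n.succ, n.choose i • ((⇑D)^[n - i] a * (⇑D)^[i + 1] b)) +
            ∑ i ∈ range n.succ, n.choose i.succ • ((⇑D)^[n - i] a * (⇑D)^[i + 1] b)) +
            1 • ((⇑D)^[n + 1] a * (⇑D)^[0] b) := by
        rw [add_comm, add_assoc]
      _ = (∑ i ∈ range n.succ,
              (n + 1).choose (i + 1) • ((⇑D)^[n + 1 - (i + 1)] a * (⇑D)^[i + 1] b)) +
            1 • ((⇑D)^[n + 1] a * (⇑D)^[0] b) := by
        simp_rw [Nat.choose_succ_succ, Nat.succ_sub_succ, add_smul, Finset.sum_add_distrib]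
      _ = ∑ i ∈ range n.succ.succ,
            n.succ.choose i • ((⇑D)^[n.succ - i] a * (⇑D)^[i] b) := by
        rw [Finset.sum_range_succ' _ n.succ, Nat.choose_zero_right, tsub_zero, one_smul,
          Function.iterate_zero_apply]
    congr
    refine (Finset.sum_range_succ' _ _).trans (congr_arg₂ (· + ·) ?_ ?_)
    · rw [Finset.sum_range_succ, Nat.choose_succ_self, zero_smul, add_zero]
      refine Finset.sum_congr rfl fun i hi => ?_
      rw [Finset.mem_range] at hi
      congr
      omega
    · simp

theorem Derivation.pth_leibniz (p : ℕ) [Fact p.Prime] [CharP K p]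
    (D : Derivation k K K) (a b : K) :
    (⇑D)^[p] (a * b) = a * (⇑D)^[p] b + b * (⇑D)^[p] a := by
  have hp : p.Prime := Fact.out
  rw [D.iterate_leibniz, Finset.sum_range_succ,
    Finset.sum_eq_single_of_mem 0 (Finset.mem_range.2 hp.pos)
      (fun i hi hi0 => by
        have h : (p.choose i : K) = 0 := by
          rw [CharP.cast_eq_zero_iff K p]
          exact hp.dvd_choose_self hi0 (Finset.mem_range.1 hi)
        rw [nsmul_eq_mul, h, zero_mul])]
  simp only [Nat.choose_zero_right, Nat.choose_self, one_smul, Nat.sub_zero, Nat.sub_self,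
    Function.iterate_zero_apply]
  ring

end Aux

set_option synthInstance.maxHeartbeats 1000000 in
/-- If `D` is a `k`-linear derivation of a field `K` of characteristic `p > 0`
such that `[K : K^D] = p`, then `D` is `p`-closed: there exists `α ∈ K^D` with
`D^p = α • D`, where `D^p` is the `p`-fold composite of `D`. -/
theorem pClosed_of_finrank_constantField
    (k K : Type*) [Field k] [Field K] [Algebra k K]
    (p : ℕ) [Fact p.Prime] [CharP k p]
    (D : Derivation k K K)
    (hrank : Module.finrank (constantField k K D) K = p) :
    ∃ α : K, α ∈ constantField k K D ∧
      (D : K →ₗ[k] K) ^ p = α • (D : K →ₗ[k] K) := by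
  have hp : p.Prime := Fact.out
  haveI : CharP K p := charP_of_injective_algebraMap (algebraMap k K).injective p
  set F := constantField k K D with hF
  -- there is an element not killed by `D`
  have hne : ∃ t : K, D t ≠ 0 := by
    by_contra h
    push_neg at h
    have hbij : Function.Bijective (Algebra.linearMap F K) :=
      ⟨fun x y hxy => Subtype.ext hxy, fun x => ⟨⟨x, h x⟩, rfl⟩⟩
    have := (LinearEquiv.ofBijective (Algebra.linearMap F K) hbij).finrank_eq
    rw [Module.finrank_self, hrank] at this
    exact hp.one_lt.ne this
  obtain ⟨t, ht⟩ := hne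
  have hpow : ∀ x : K, ((D : K →ₗ[k] K) ^ p) x = (⇑D)^[p] x := fun x => by
    rw [Module.End.pow_apply]; rfl
  -- `D^p` is a derivation
  let Dp : Derivation k K K :=
    { toLinearMap := (D : K →ₗ[k] K) ^ p
      map_one_eq_zero' := by
        show ((D : K →ₗ[k] K) ^ p) 1 = 0
        rw [hpow]
        exact D.iterate_eq_zero_of hp.ne_zero D.map_one_eq_zero
      leibniz' := fun a b => by
        show ((D : K →ₗ[k] K) ^ p) (a * b) = _
        rw [hpow, Derivation.pth_leibniz p D a b, smul_eq_mul, smul_eq_mul, hpow, hpow] }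
  set α := (⇑D)^[p] t / D t with hα
  set E : Derivation k K K := Dp - α • D with hEdef
  have hE : ∀ x, E x = (⇑D)^[p] x - α * D x := fun x => by
    rw [hEdef]
    show Dp x - (α • D) x = _
    rw [Derivation.smul_apply, smul_eq_mul]
    congr 1
    exact hpow x
  have hEt : E t = 0 := by
    rw [hE, hα, div_mul_cancel₀ _ ht, sub_self]
  have hF_le : ∀ x ∈ F, E x = 0 := by
    intro x hx
    have hDx : D x = 0 := hx
    rw [hE, D.iterate_eq_zero_of hp.ne_zero hDx, hDx, mul_zero, sub_zero]
  -- constants of E form an intermediate field over F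
  let S : IntermediateField F K :=
    Subfield.toIntermediateField (constantField k K E) fun x => hF_le _ x.2
  have htS : t ∈ S := hEt
  -- t^p lies in F
  have htp : D (t ^ p) = 0 := by
    rw [D.leibniz_pow, nsmul_eq_mul, CharP.cast_eq_zero K p, zero_mul]
  set a : F := ⟨t ^ p, htp⟩ with ha
  have hirr : Irreducible (X ^ p - C a) := by
    refine X_pow_sub_C_irreducible_of_prime hp fun b hb => ht ?_
    have hbK : (b : K) ^ p = t ^ p := congrArg Subtype.val hb
    have hz : ((b : K) - t) ^ p = 0 := by
      rw [sub_pow_char, hbK, sub_self]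
    have hbt : (b : K) = t := by
      rwa [pow_eq_zero_iff hp.ne_zero, sub_eq_zero] at hz
    rw [← hbt]
    exact b.2
  have hroot : (Polynomial.aeval t) (X ^ p - C a) = 0 := by
    rw [map_sub, aeval_X_pow, aeval_C]
    show t ^ p - (algebraMap F K) a = 0
    rw [show (algebraMap F K) a = t ^ p from rfl, sub_self]
  have hmonic : (X ^ p - C a).Monic := monic_X_pow_sub_C a hp.ne_zero
  have hint : IsIntegral F t := ⟨X ^ p - C a, hmonic, hroot⟩
  have hmin : minpoly F t = X ^ p - C a :=
    (minpoly.eq_of_irreducible_of_monic hirr hroot hmonic).symm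
  have hfin : Module.finrank F F⟮t⟯ = p := by
    rw [IntermediateField.adjoin.finrank hint, hmin, natDegree_X_pow_sub_C]
  haveI : FiniteDimensional F K :=
    Module.finite_of_finrank_pos (by rw [hrank]; exact hp.pos)
  have htop : ∀ x : K, x ∈ F⟮t⟯ := by
    have heq : Subalgebra.toSubmodule F⟮t⟯.toSubalgebra = ⊤ := by
      apply Submodule.eq_top_of_finrank_eq
      rw [Subalgebra.finrank_toSubmodule, hrank]
      exact hfin
    intro x
    have : x ∈ Subalgebra.toSubmodule F⟮t⟯.toSubalgebra := heq ▸ Submodule.mem_top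
    exact this
  have hle : F⟮t⟯ ≤ S :=
    IntermediateField.adjoin_le_iff.2 (Set.singleton_subset_iff.2 htS)
  have hE0 : ∀ x, (⇑D)^[p] x = α * D x := fun x => by
    have hx : E x = 0 := hle (htop x)
    rw [hE] at hx
    exact sub_eq_zero.mp hx
  refine ⟨α, ?_, ?_⟩
  · -- D α = 0
    show D α = 0
    have h1 : (⇑D)^[p] (D t) = α * D (D t) := hE0 (D t)
    have h2 : D ((⇑D)^[p] t) = D (α * D t) := congrArg D (hE0 t)
    rw [D.leibniz, smul_eq_mul, smul_eq_mul] at h2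
    have h3 : D ((⇑D)^[p] t) = (⇑D)^[p] (D t) :=
      (Function.iterate_succ_apply' (⇑D) p t).symm.trans (Function.iterate_succ_apply (⇑D) p t)
    rw [h3, h1] at h2
    have h4 : D t * D α = 0 := left_eq_add.mp h2
    exact (mul_eq_zero.1 h4).resolve_left ht
  · ext x
    rw [hpow, LinearMap.smul_apply, smul_eq_mul]
    exact hE0 x
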